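/- Let n ≥ 1 be an integer, s ∈ (0, 1), a := 1 − 2s, ε > 0, and let Ω ⊆ ℝⁿ be a measurable set with 0 < |Ω| < ∞. For every positive integer m define V_m(x, y) := max{0, 1 − y/m} on Ω × (0, ∞). Then: (i) ∬_{Ω × (0,∞)} ( ε |∇_x V_m|² + |∂_y V_m|² ) y^a dx dy = |Ω| / ((2 − 2s) m^{2s}), so this quantity tends to 0 as m → ∞, while V_m(x, 0) = 1 for all x ∈ Ω; (ii) the constant function V ≡ 1 satisfies ∬_{Ω × (0,∞)} V² y^a dx dy = +∞. -/

import Mathlib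

open MeasureTheory Set Real Filter

lemma aux_deriv_lt (m : ℕ) (hm : 0 < m) {y : ℝ} (hy : y < m) :
    deriv (fun y' => max 0 (1 - y' / (m : ℝ))) y = -(m : ℝ)⁻¹ := by
  have hm' : (0 : ℝ) < m := by exact_mod_cast hm
  have hev : (fun y' : ℝ => max 0 (1 - y' / (m : ℝ))) =ᶠ[nhds y]
      fun y' => 1 - y' / (m : ℝ) := by
    filter_upwards [Iio_mem_nhds hy] with z hz
    have h1 : z / (m : ℝ) < 1 := (div_lt_one hm').mpr hz
    exact max_eq_right (by linarith)
  rw [hev.deriv_eq]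
  have h : HasDerivAt (fun y' : ℝ => 1 - y' / (m : ℝ)) (-(m : ℝ)⁻¹) y := by
    simpa [one_div] using ((hasDerivAt_id y).div_const (m : ℝ)).const_sub 1
  exact h.deriv

lemma aux_deriv_gt (m : ℕ) (hm : 0 < m) {y : ℝ} (hy : (m : ℝ) < y) :
    deriv (fun y' => max 0 (1 - y' / (m : ℝ))) y = 0 := by
  have hm' : (0 : ℝ) < m := by exact_mod_cast hm
  have hev : (fun y' : ℝ => max 0 (1 - y' / (m : ℝ))) =ᶠ[nhds y]
      fun _ => (0 : ℝ) := by
    filter_upwards [Ioi_mem_nhds hy] with z hz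
    have h1 : 1 < z / (m : ℝ) := (one_lt_div hm').mpr hz
    exact max_eq_left (by linarith)
  rw [hev.deriv_eq, deriv_const]

lemma aux_inner (s a : ℝ) (hs : s ∈ Set.Ioo (0 : ℝ) 1) (ha : a = 1 - 2 * s)
    (m : ℕ) (hm : 0 < m) :
    ∫ y in Set.Ioi (0 : ℝ), (deriv (fun y' => max 0 (1 - y' / (m : ℝ))) y) ^ 2 * y ^ a
      = 1 / ((2 - 2 * s) * (m : ℝ) ^ (2 * s)) := by
  obtain ⟨hs0, hs1⟩ := hs
  subst ha
  have hm' : (0 : ℝ) < m := by exact_mod_cast hm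
  have hcong : ∀ᵐ y : ℝ, y ∈ Ioi (0 : ℝ) →
      (deriv (fun y' => max 0 (1 - y' / (m : ℝ))) y) ^ 2 * y ^ (1 - 2 * s)
        = Set.indicator (Iio (m : ℝ)) (fun y => (m : ℝ)⁻¹ ^ 2 * y ^ (1 - 2 * s)) y := by
    have hne : ∀ᵐ y : ℝ, y ≠ (m : ℝ) := by
      rw [ae_iff]
      simpa using measure_singleton (m : ℝ)
    filter_upwards [hne] with y hy _
    rcases lt_or_gt_of_ne hy with h | h
    · rw [aux_deriv_lt m hm h, Set.indicator_of_mem (by exact h)]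
      ring
    · rw [aux_deriv_gt m hm h, Set.indicator_of_notMem (by simpa using h.le)]
      ring
  rw [setIntegral_congr_ae measurableSet_Ioi hcong,
    setIntegral_indicator measurableSet_Iio, Set.Ioi_inter_Iio, integral_const_mul]
  have hioo : ∫ y in Ioo (0 : ℝ) m, y ^ (1 - 2 * s)
      = (m : ℝ) ^ (1 - 2 * s + 1) / (1 - 2 * s + 1) := by
    rw [← integral_Ioc_eq_integral_Ioo, ← intervalIntegral.integral_of_le hm'.le,
      integral_rpow (Or.inl (by linarith : (-1 : ℝ) < 1 - 2 * s)),
      Real.zero_rpow (by intro h; nlinarith : 1 - 2 * s + 1 ≠ 0)]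
    ring
  rw [hioo]
  have h2s : (0 : ℝ) < (m : ℝ) ^ (2 * s) := Real.rpow_pos_of_pos hm' _
  have hkey : (m : ℝ) ^ (1 - 2 * s + 1) = (m : ℝ) ^ 2 * ((m : ℝ) ^ (2 * s))⁻¹ := by
    rw [show (1 : ℝ) - 2 * s + 1 = (2 : ℝ) + -(2 * s) by ring,
      Real.rpow_add hm', Real.rpow_neg hm'.le, Real.rpow_two]
  rw [hkey]
  have h22 : (2 : ℝ) - 2 * s ≠ 0 := by intro h; nlinarith
  rw [show (1 : ℝ) - 2 * s + 1 = 2 - 2 * s by ring,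
    eq_div_iff (mul_ne_zero h22 h2s.ne')]
  field_simp

lemma aux_lintegral_top (s a : ℝ) (hs : s ∈ Set.Ioo (0 : ℝ) 1) (ha : a = 1 - 2 * s) :
    (∫⁻ y in Set.Ioi (1 : ℝ), ENNReal.ofReal (y ^ a)) = ⊤ := by
  by_contra hne
  have hmeas : Measurable fun y : ℝ => y ^ a := by fun_prop
  have hnn : 0 ≤ᵐ[volume.restrict (Ioi (1 : ℝ))] fun y : ℝ => y ^ a := by
    filter_upwards [ae_restrict_mem measurableSet_Ioi] with y hy
    exact Real.rpow_nonneg (by linarith [mem_Ioi.mp hy]) a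
  have hint : IntegrableOn (fun y : ℝ => y ^ a) (Ioi 1) := by
    refine ⟨hmeas.aestronglyMeasurable.restrict, ?_⟩
    rw [hasFiniteIntegral_iff_ofReal hnn]
    exact lt_top_iff_ne_top.mpr hne
  rw [integrableOn_Ioi_rpow_iff zero_lt_one] at hint
  rw [ha] at hint
  nlinarith [hs.2]

/-- **Strictness of the inclusion `H¹(C, y^a) ⊂ H^ε(C, y^a)`.** For the truncations
`V_m(x,y) = max{0, 1 − y/m}` the weighted Dirichlet energy equals
`|Ω|/((2−2s)m^{2s})` and hence tends to `0`, while `V_m(·,0) ≡ 1`; on the other hand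
the constant function `1` has infinite weighted `L²` norm on the cylinder. -/
theorem constants_not_in_weighted_H1
    (n : ℕ) (hn : 1 ≤ n) (s : ℝ) (hs : s ∈ Set.Ioo (0 : ℝ) 1) (a : ℝ) (ha : a = 1 - 2 * s)
    (ε : ℝ) (hε : 0 < ε)
    (Ω : Set (EuclideanSpace ℝ (Fin n))) (hΩm : MeasurableSet Ω)
    (hΩpos : 0 < volume Ω) (hΩfin : volume Ω < ⊤) :
    (∀ m : ℕ, 0 < m →
      (∫ x in Ω, ∫ y in Set.Ioi (0 : ℝ),
          (ε * ‖gradient (fun _x' : EuclideanSpace ℝ (Fin n) =>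
              max 0 (1 - y / (m : ℝ))) x‖ ^ 2 +
            (deriv (fun y' => max 0 (1 - y' / (m : ℝ))) y) ^ 2) * y ^ a)
        = (volume Ω).toReal / ((2 - 2 * s) * (m : ℝ) ^ (2 * s))) ∧
    Tendsto (fun m : ℕ =>
      ∫ x in Ω, ∫ y in Set.Ioi (0 : ℝ),
        (ε * ‖gradient (fun _x' : EuclideanSpace ℝ (Fin n) =>
            max 0 (1 - y / (m : ℝ))) x‖ ^ 2 +
          (deriv (fun y' => max 0 (1 - y' / (m : ℝ))) y) ^ 2) * y ^ a)
      atTop (nhds 0) ∧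
    (∀ m : ℕ, 0 < m → ∀ x : EuclideanSpace ℝ (Fin n),
      max 0 (1 - (0 : ℝ) / (m : ℝ)) = 1) ∧
    (∫⁻ x in Ω, ∫⁻ y in Set.Ioi (0 : ℝ),
        ENNReal.ofReal ((1 : ℝ) ^ 2 * y ^ a)) = ⊤ := by
  have hmain : ∀ m : ℕ, 0 < m →
      (∫ x in Ω, ∫ y in Set.Ioi (0 : ℝ),
          (ε * ‖gradient (fun _x' : EuclideanSpace ℝ (Fin n) =>
              max 0 (1 - y / (m : ℝ))) x‖ ^ 2 +
            (deriv (fun y' => max 0 (1 - y' / (m : ℝ))) y) ^ 2) * y ^ a)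
        = (volume Ω).toReal / ((2 - 2 * s) * (m : ℝ) ^ (2 * s)) := by
    intro m hm
    have hinner : ∀ x : EuclideanSpace ℝ (Fin n),
        (∫ y in Set.Ioi (0 : ℝ),
          (ε * ‖gradient (fun _x' : EuclideanSpace ℝ (Fin n) =>
              max 0 (1 - y / (m : ℝ))) x‖ ^ 2 +
            (deriv (fun y' => max 0 (1 - y' / (m : ℝ))) y) ^ 2) * y ^ a)
          = 1 / ((2 - 2 * s) * (m : ℝ) ^ (2 * s)) := by
      intro x
      have hpt : ∀ y : ℝ,
          (ε * ‖gradient (fun _x' : EuclideanSpace ℝ (Fin n) =>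
              max 0 (1 - y / (m : ℝ))) x‖ ^ 2 +
            (deriv (fun y' => max 0 (1 - y' / (m : ℝ))) y) ^ 2) * y ^ a
          = (deriv (fun y' => max 0 (1 - y' / (m : ℝ))) y) ^ 2 * y ^ a := by
        intro y
        rw [show (fun _x' : EuclideanSpace ℝ (Fin n) => max 0 (1 - y / (m : ℝ))) =
            Function.const _ (max 0 (1 - y / (m : ℝ))) from rfl, gradient_const]
        simp
      simp_rw [hpt]
      exact aux_inner s a hs ha m hm
    simp_rw [hinner]
    rw [setIntegral_const, smul_eq_mul, mul_one_div, measureReal_def]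
  refine ⟨hmain, ?_, ?_, ?_⟩
  · have h1 : Tendsto (fun m : ℕ => (2 - 2 * s) * (m : ℝ) ^ (2 * s)) atTop atTop := by
      refine Tendsto.const_mul_atTop (by linarith [hs.2] : (0 : ℝ) < 2 - 2 * s) ?_
      exact (tendsto_rpow_atTop (by linarith [hs.1] : (0 : ℝ) < 2 * s)).comp
        tendsto_natCast_atTop_atTop
    have h2 : Tendsto (fun m : ℕ =>
        (volume Ω).toReal / ((2 - 2 * s) * (m : ℝ) ^ (2 * s))) atTop (nhds 0) :=
      tendsto_const_nhds.div_atTop h1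
    refine h2.congr' ?_
    filter_upwards [eventually_gt_atTop 0] with m hm
    exact (hmain m hm).symm
  · intro m hm x
    simp
  · have hinn : (∫⁻ y in Set.Ioi (0 : ℝ), ENNReal.ofReal ((1 : ℝ) ^ 2 * y ^ a)) = ⊤ := by
      refine top_le_iff.mp ?_
      calc (⊤ : ENNReal) = ∫⁻ y in Set.Ioi (1 : ℝ), ENNReal.ofReal (y ^ a) :=
            (aux_lintegral_top s a hs ha).symm
        _ ≤ ∫⁻ y in Set.Ioi (0 : ℝ), ENNReal.ofReal (y ^ a) :=
            lintegral_mono_set (Set.Ioi_subset_Ioi zero_le_one)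
        _ = _ := by simp
    simp_rw [hinn]
    rw [setLIntegral_const, ENNReal.top_mul hΩpos.ne']
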